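/- Let (X,d) be a non-branching geodesic complete separable metric space, h:[0,∞)→[0,∞) strictly convex and non-decreasing, c(x,y):=h(d(x,y)), and let Γ⊂X×X be c-cyclically monotone. If Λ₁,Λ₂⊂Γ satisfy P₂(Λ₁)∩P₂(Λ₂)=∅, then for every A⊂X and every t∈(0,1) the evolution sets are disjoint: A_{t,Λ₁}∩A_{t,Λ₂}=∅. -/

import Mathlib

/-!
Let `γ₁, γ₂` be geodesics with endpoint pairs in `Γ` that meet at an interior time `t`. Swapping
their endpoints cannot lower the total cost, while the triangle inequality through the meeting
point bounds the swapped distances by convex combinations of the two lengths. Strict convexity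
and monotonicity of `h` then force both lengths to agree and the swapped distance
`d(γ₁ 0, γ₂ 1)` to equal that common length. Hence following `γ₁` up to time `t` and `γ₂`
afterwards is again a geodesic; it agrees with `γ₁` on `[0, t]`, so by non-branching it ends at
`γ₁ 1`, i.e. `γ₁ 1 = γ₂ 1`, contradicting `P₂(Λ₁) ∩ P₂(Λ₂) = ∅`.
-/

open Set Metric

/-- A geodesic parametrized on `[0,1]`: `d(γ_s,γ_t) = |s-t| · d(γ_0,γ_1)`. -/
def IsGeodesic {X : Type*} [MetricSpace X] (γ : ℝ → X) : Prop :=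
  ∀ s ∈ Set.Icc (0:ℝ) 1, ∀ t ∈ Set.Icc (0:ℝ) 1,
    dist (γ s) (γ t) = |s - t| * dist (γ 0) (γ 1)

/-- A geodesic metric space: every pair of points is joined by a geodesic. -/
def GeodesicMetricSpace (X : Type*) [MetricSpace X] : Prop :=
  ∀ x y : X, ∃ γ : ℝ → X, IsGeodesic γ ∧ γ 0 = x ∧ γ 1 = y

/-- Non-branching: two geodesics agreeing on `[0,t]` for some `t ∈ (0,1)` agree on `[0,1]`. -/
def NonBranching (X : Type*) [MetricSpace X] : Prop :=
  ∀ γ₁ γ₂ : ℝ → X, IsGeodesic γ₁ → IsGeodesic γ₂ →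
    ∀ t ∈ Set.Ioo (0:ℝ) 1, (∀ s ∈ Set.Icc (0:ℝ) t, γ₁ s = γ₂ s) →
      ∀ s ∈ Set.Icc (0:ℝ) 1, γ₁ s = γ₂ s

/-- `c`-cyclical monotonicity of a set `Γ ⊆ X × X`. -/
def CyclicallyMonotone {X : Type*} (c : X → X → ℝ) (Γ : Set (X × X)) : Prop :=
  ∀ (N : ℕ) (p : Fin (N + 1) → X × X), (∀ i, p i ∈ Γ) →
    ∑ i, c (p i).1 (p i).2 ≤ ∑ i, c (p (i + 1)).1 (p i).2

/-- The evolution set `A_{t,Λ} = {γ_t : γ geodesic, γ_0 ∈ A, (γ_0,γ_1) ∈ Λ}`. -/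
def evoSet {X : Type*} [MetricSpace X] (A : Set X) (Λ : Set (X × X)) (t : ℝ) : Set X :=
  {z | ∃ γ : ℝ → X, IsGeodesic γ ∧ γ 0 ∈ A ∧ (γ 0, γ 1) ∈ Λ ∧ γ t = z}

theorem StrictConvexOn.strictMonoOn_of_monotoneOn {s : Set ℝ} {f : ℝ → ℝ}
    (hconv : StrictConvexOn ℝ s f) (hmono : MonotoneOn f s) : StrictMonoOn f s := by
  intro x hx y hy hxy
  refine (hmono hx hy hxy.le).lt_of_ne fun hfxy => ?_
  have hmid := hconv.2 hx hy hxy.ne one_half_pos one_half_pos (add_halves 1)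
  have hmid_mem : (1 / 2 : ℝ) • x + (1 / 2 : ℝ) • y ∈ s :=
    hconv.1 hx hy one_half_pos.le one_half_pos.le (add_halves 1)
  have hle := hmono hx hmid_mem (by simp only [smul_eq_mul]; linarith)
  simp only [smul_eq_mul] at hmid hle
  linarith

theorem StrictConvexOn.eq_of_add_le_add_swap {s : Set ℝ} {f : ℝ → ℝ}
    (hconv : StrictConvexOn ℝ s f) {x y a b : ℝ} (hx : x ∈ s) (hy : y ∈ s)
    (ha : 0 < a) (hb : 0 < b) (hab : a + b = 1)
    (hle : f x + f y ≤ f (a * x + b * y) + f (a * y + b * x)) : x = y := by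
  by_contra hxy
  have h₁ := hconv.2 hx hy hxy ha hb hab
  have h₂ := hconv.2 hy hx (Ne.symm hxy) ha hb hab
  simp only [smul_eq_mul] at h₁ h₂
  have hsum : (a + b) * f x + (a + b) * f y = f x + f y := by rw [hab]; ring
  linarith

theorem CyclicallyMonotone.add_le_add_swap {X : Type*} {c : X → X → ℝ} {Γ : Set (X × X)}
    (hΓ : CyclicallyMonotone c Γ) {p q : X × X} (hp : p ∈ Γ) (hq : q ∈ Γ) :
    c p.1 p.2 + c q.1 q.2 ≤ c q.1 p.2 + c p.1 q.2 := by
  have := hΓ 1 ![p, q] (by intro i; fin_cases i <;> assumption)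
  simpa [Fin.sum_univ_two, show (1 + 1 : Fin 2) = 0 from rfl] using this

namespace IsGeodesic

variable {X : Type*} [MetricSpace X] {γ γ₁ γ₂ : ℝ → X} {s t u : ℝ}

theorem dist_eq_of_le (hγ : IsGeodesic γ) (hs : s ∈ Icc (0 : ℝ) 1) (hu : u ∈ Icc (0 : ℝ) 1)
    (hsu : s ≤ u) : dist (γ s) (γ u) = (u - s) * dist (γ 0) (γ 1) := by
  rw [hγ s hs u hu, abs_sub_comm, abs_of_nonneg (sub_nonneg.2 hsu)]

theorem dist_le_of_meet (h₁ : IsGeodesic γ₁) (h₂ : IsGeodesic γ₂) (hmeet : γ₁ t = γ₂ t)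
    (hs : s ∈ Icc (0 : ℝ) 1) (ht : t ∈ Icc (0 : ℝ) 1) (hu : u ∈ Icc (0 : ℝ) 1)
    (hst : s ≤ t) (htu : t ≤ u) :
    dist (γ₁ s) (γ₂ u) ≤ (t - s) * dist (γ₁ 0) (γ₁ 1) + (u - t) * dist (γ₂ 0) (γ₂ 1) :=
  calc dist (γ₁ s) (γ₂ u) ≤ dist (γ₁ s) (γ₁ t) + dist (γ₁ t) (γ₂ u) := dist_triangle _ _ _
    _ = _ := by rw [h₁.dist_eq_of_le hs ht hst, hmeet, h₂.dist_eq_of_le ht hu htu]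

section Concatenation

variable (h₁ : IsGeodesic γ₁) (h₂ : IsGeodesic γ₂) (ht : t ∈ Icc (0 : ℝ) 1)
  (hmeet : γ₁ t = γ₂ t) (hlen : dist (γ₂ 0) (γ₂ 1) = dist (γ₁ 0) (γ₁ 1))
  (hends : dist (γ₁ 0) (γ₂ 1) = dist (γ₁ 0) (γ₁ 1))
include h₁ h₂ ht hmeet hlen hends

/-- Since the whole of `d(γ₁ 0, γ₂ 1)` is used up, the triangle inequality through the meeting
point is an equality for every pair of times on either side of it. -/
theorem dist_eq_of_meet (hs : s ∈ Icc (0 : ℝ) 1) (hu : u ∈ Icc (0 : ℝ) 1)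
    (hst : s ≤ t) (htu : t ≤ u) : dist (γ₁ s) (γ₂ u) = (u - s) * dist (γ₁ 0) (γ₁ 1) := by
  have h0 : (0 : ℝ) ∈ Icc (0 : ℝ) 1 := left_mem_Icc.2 zero_le_one
  have h1 : (1 : ℝ) ∈ Icc (0 : ℝ) 1 := right_mem_Icc.2 zero_le_one
  have upper := dist_le_of_meet h₁ h₂ hmeet hs ht hu hst htu
  have lower := dist_triangle4 (γ₁ 0) (γ₁ s) (γ₂ u) (γ₂ 1)
  rw [hends, h₁.dist_eq_of_le h0 hs hs.1, h₂.dist_eq_of_le hu h1 hu.2, hlen] at lower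
  rw [hlen] at upper
  linarith

theorem piecewise : IsGeodesic fun s => if s ≤ t then γ₁ s else γ₂ s := by
  have hend : (if (1 : ℝ) ≤ t then γ₁ 1 else γ₂ 1) = γ₂ 1 := by
    split_ifs with h1t
    · rwa [le_antisymm ht.2 h1t] at hmeet
    · rfl
  intro s hs u hu
  simp only [if_pos ht.1, hend, hends]
  split_ifs with hst hut hut
  · rw [h₁ s hs u hu]
  · rw [dist_eq_of_meet h₁ h₂ ht hmeet hlen hends hs hu hst (by linarith), abs_sub_comm,
      abs_of_nonneg (by linarith)]
  · rw [dist_comm, dist_eq_of_meet h₁ h₂ ht hmeet hlen hends hu hs hut (by linarith),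
      abs_of_nonneg (by linarith)]
  · rw [h₂ s hs u hu, hlen]

end Concatenation

theorem dist_eq_of_add_le_add_swap {h : ℝ → ℝ} (hconv : StrictConvexOn ℝ (Ici 0) h)
    (hmono : MonotoneOn h (Ici 0)) (h₁ : IsGeodesic γ₁) (h₂ : IsGeodesic γ₂)
    (ht : t ∈ Ioo (0 : ℝ) 1) (hmeet : γ₁ t = γ₂ t)
    (hswap : h (dist (γ₁ 0) (γ₁ 1)) + h (dist (γ₂ 0) (γ₂ 1)) ≤
      h (dist (γ₂ 0) (γ₁ 1)) + h (dist (γ₁ 0) (γ₂ 1))) :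
    dist (γ₂ 0) (γ₂ 1) = dist (γ₁ 0) (γ₁ 1) ∧ dist (γ₁ 0) (γ₂ 1) = dist (γ₁ 0) (γ₁ 1) := by
  set d₁ := dist (γ₁ 0) (γ₁ 1)
  set d₂ := dist (γ₂ 0) (γ₂ 1)
  have h0 : (0 : ℝ) ∈ Icc (0 : ℝ) 1 := left_mem_Icc.2 zero_le_one
  have h1 : (1 : ℝ) ∈ Icc (0 : ℝ) 1 := right_mem_Icc.2 zero_le_one
  have hcross₁ : dist (γ₂ 0) (γ₁ 1) ≤ t * d₂ + (1 - t) * d₁ := by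
    simpa using dist_le_of_meet h₂ h₁ hmeet.symm h0 (Ioo_subset_Icc_self ht) h1 ht.1.le ht.2.le
  have hcross₂ : dist (γ₁ 0) (γ₂ 1) ≤ t * d₁ + (1 - t) * d₂ := by
    simpa using dist_le_of_meet h₁ h₂ hmeet h0 (Ioo_subset_Icc_self ht) h1 ht.1.le ht.2.le
  have hcomb_mem : ∀ {a b : ℝ}, 0 ≤ a → 0 ≤ b → t * a + (1 - t) * b ∈ Ici (0 : ℝ) := fun ha hb =>
    add_nonneg (mul_nonneg ht.1.le ha) (mul_nonneg (sub_nonneg.2 ht.2.le) hb)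
  have hlen : d₂ = d₁ := by
    refine hconv.eq_of_add_le_add_swap dist_nonneg dist_nonneg ht.1 (sub_pos.2 ht.2)
      (add_sub_cancel _ _) ?_
    calc h d₂ + h d₁ ≤ h (dist (γ₂ 0) (γ₁ 1)) + h (dist (γ₁ 0) (γ₂ 1)) := by linarith
      _ ≤ h (t * d₂ + (1 - t) * d₁) + h (t * d₁ + (1 - t) * d₂) :=
        add_le_add (hmono dist_nonneg (hcomb_mem dist_nonneg dist_nonneg) hcross₁)
          (hmono dist_nonneg (hcomb_mem dist_nonneg dist_nonneg) hcross₂)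
  refine ⟨hlen, ?_⟩
  have hcomb : t * d₁ + (1 - t) * d₁ = d₁ := by ring
  rw [hlen, hcomb] at hcross₁ hcross₂
  rw [hlen] at hswap
  have hd₁ : d₁ ∈ Ici (0 : ℝ) := dist_nonneg
  have hle := hmono dist_nonneg hd₁ hcross₁
  exact le_antisymm hcross₂ <|
    ((hconv.strictMonoOn_of_monotoneOn hmono).le_iff_le hd₁ dist_nonneg).1 (by linarith)

end IsGeodesic

theorem NonBranching.apply_one_eq_of_meet {X : Type*} [MetricSpace X] (hnb : NonBranching X)
    {γ₁ γ₂ : ℝ → X} {t : ℝ} (h₁ : IsGeodesic γ₁) (h₂ : IsGeodesic γ₂) (ht : t ∈ Ioo (0 : ℝ) 1)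
    (hmeet : γ₁ t = γ₂ t) (hlen : dist (γ₂ 0) (γ₂ 1) = dist (γ₁ 0) (γ₁ 1))
    (hends : dist (γ₁ 0) (γ₂ 1) = dist (γ₁ 0) (γ₁ 1)) : γ₁ 1 = γ₂ 1 := by
  have hσ := h₁.piecewise h₂ (Ioo_subset_Icc_self ht) hmeet hlen hends
  have := hnb γ₁ _ h₁ hσ t ht (fun s hs => (if_pos hs.2).symm) 1 (right_mem_Icc.2 zero_le_one)
  rwa [if_neg (not_le.2 ht.2)] at this

theorem disjoint_evolutions_general
    {X : Type*} [MetricSpace X] (hnb : NonBranching X)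
    (h : ℝ → ℝ) (hconv : StrictConvexOn ℝ (Set.Ici (0:ℝ)) h)
    (hmono : MonotoneOn h (Set.Ici (0:ℝ)))
    (Γ : Set (X × X)) (hΓ : CyclicallyMonotone (fun x y => h (dist x y)) Γ)
    (Λ₁ Λ₂ : Set (X × X)) (hΛ₁ : Λ₁ ⊆ Γ) (hΛ₂ : Λ₂ ⊆ Γ)
    (hdisj : (Prod.snd '' Λ₁) ∩ (Prod.snd '' Λ₂) = ∅)
    (A : Set X) (t : ℝ) (ht : t ∈ Set.Ioo (0:ℝ) 1) :
    evoSet A Λ₁ t ∩ evoSet A Λ₂ t = ∅ := by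
  refine eq_empty_of_forall_notMem ?_
  rintro _ ⟨⟨γ₁, h₁, -, hm₁, rfl⟩, ⟨γ₂, h₂, -, hm₂, hmeet⟩⟩
  obtain ⟨hlen, hends⟩ := h₁.dist_eq_of_add_le_add_swap hconv hmono h₂ ht hmeet.symm
    (hΓ.add_le_add_swap (hΛ₁ hm₁) (hΛ₂ hm₂))
  have hend := hnb.apply_one_eq_of_meet h₁ h₂ ht hmeet.symm hlen hends
  exact (eq_empty_iff_forall_notMem.1 hdisj) (γ₁ 1) ⟨⟨_, hm₁, rfl⟩, ⟨_, hm₂, hend.symm⟩⟩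

theorem disjoint_evolutions
    {X : Type*} [MetricSpace X] [CompleteSpace X] [TopologicalSpace.SeparableSpace X]
    (hgeo : GeodesicMetricSpace X) (hnb : NonBranching X)
    (h : ℝ → ℝ) (hconv : StrictConvexOn ℝ (Set.Ici (0:ℝ)) h)
    (hmono : MonotoneOn h (Set.Ici (0:ℝ))) (hpos : ∀ x ∈ Set.Ici (0:ℝ), 0 ≤ h x)
    (Γ : Set (X × X)) (hΓ : CyclicallyMonotone (fun x y => h (dist x y)) Γ)
    (Λ₁ Λ₂ : Set (X × X)) (hΛ₁ : Λ₁ ⊆ Γ) (hΛ₂ : Λ₂ ⊆ Γ)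
    (hdisj : (Prod.snd '' Λ₁) ∩ (Prod.snd '' Λ₂) = ∅)
    (A : Set X) (t : ℝ) (ht : t ∈ Set.Ioo (0:ℝ) 1) :
    evoSet A Λ₁ t ∩ evoSet A Λ₂ t = ∅ :=
  disjoint_evolutions_general hnb h hconv hmono Γ hΓ Λ₁ Λ₂ hΛ₁ hΛ₂ hdisj A t ht
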